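/- For any pair of integers k, ℓ ≥ 3, the Grundy total domination number of the Cartesian product of paths satisfies γ_gr^t(P_k □ P_ℓ) ≥ kℓ − min{k, ℓ}. -/

import Mathlib

open SimpleGraph

/-- A legal open neighborhood sequence in `G`. -/
def IsOpenLegal {α : Type*} (G : SimpleGraph α) (L : List α) : Prop :=
  L.Nodup ∧ ∀ i : Fin L.length, ∃ w, G.Adj (L.get i) w ∧
    ∀ j : Fin L.length, j < i → ¬ G.Adj (L.get j) w

/-- The Grundy total domination number of `G`. -/
noncomputable def grundyT {α : Type*} (G : SimpleGraph α) : ℕ :=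
  sSup {n | ∃ L : List α, IsOpenLegal G L ∧ L.length = n}

/-- A legal closed neighborhood (dominating) sequence in `G`. -/
def IsClosedLegal {α : Type*} (G : SimpleGraph α) (L : List α) : Prop :=
  L.Nodup ∧ ∀ i : Fin L.length, ∃ w, (G.Adj (L.get i) w ∨ L.get i = w) ∧
    ∀ j : Fin L.length, j < i → ¬ (G.Adj (L.get j) w ∨ L.get j = w)

/-- The Grundy domination number of `G`. -/
noncomputable def grundyDom {α : Type*} (G : SimpleGraph α) : ℕ :=
  sSup {n | ∃ L : List α, IsClosedLegal G L ∧ L.length = n}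

/-- The direct (tensor) product of simple graphs. -/
def directProd {α β : Type*} (G : SimpleGraph α) (H : SimpleGraph β) : SimpleGraph (α × β) where
  Adj x y := G.Adj x.1 y.1 ∧ H.Adj x.2 y.2
  symm := ⟨fun _ _ h => ⟨h.1.symm, h.2.symm⟩⟩
  loopless := ⟨fun _ h => G.irrefl h.1⟩

/-- The lexicographic product of simple graphs. -/
def lexProd {α β : Type*} (G : SimpleGraph α) (H : SimpleGraph β) : SimpleGraph (α × β) where
  Adj x y := G.Adj x.1 y.1 ∨ (x.1 = y.1 ∧ H.Adj x.2 y.2)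
  symm := by
    refine ⟨?_⟩
    rintro x y (h | ⟨h1, h2⟩)
    · exact Or.inl h.symm
    · exact Or.inr ⟨h1.symm, h2.symm⟩
  loopless := by
    refine ⟨?_⟩
    rintro x (h | ⟨_, h⟩)
    · exact G.irrefl h
    · exact H.irrefl h

/-- The strong product of simple graphs. -/
def strongProd {α β : Type*} (G : SimpleGraph α) (H : SimpleGraph β) : SimpleGraph (α × β) where
  Adj x y := (G.Adj x.1 y.1 ∧ x.2 = y.2) ∨ (x.1 = y.1 ∧ H.Adj x.2 y.2) ∨
    (G.Adj x.1 y.1 ∧ H.Adj x.2 y.2)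
  symm := by
    refine ⟨?_⟩
    rintro x y (⟨h, e⟩ | ⟨e, h⟩ | ⟨h1, h2⟩)
    · exact Or.inl ⟨h.symm, e.symm⟩
    · exact Or.inr (Or.inl ⟨e.symm, h.symm⟩)
    · exact Or.inr (Or.inr ⟨h1.symm, h2.symm⟩)
  loopless := by
    refine ⟨?_⟩
    rintro x (⟨h, _⟩ | ⟨_, h⟩ | ⟨h, _⟩)
    · exact G.irrefl h
    · exact H.irrefl h
    · exact G.irrefl h

/-- The minimum number of complete bipartite subgraphs of `G` covering all edges of `G`. -/
noncomputable def bc {α : Type*} (G : SimpleGraph α) : ℕ :=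
  sInf {k | ∃ A B : Fin k → Set α,
    (∀ i a b, a ∈ A i → b ∈ B i → G.Adj a b) ∧
    (∀ u v, G.Adj u v → ∃ i, (u ∈ A i ∧ v ∈ B i) ∨ (v ∈ A i ∧ u ∈ B i))}

/-- `aD G L` is the number of entries of `L` not adjacent to any earlier entry. -/
noncomputable def aD {α : Type*} (G : SimpleGraph α) (L : List α) : ℕ :=
  {i : Fin L.length | ∀ j : Fin L.length, j < i → ¬ G.Adj (L.get j) (L.get i)}.ncard

/-- The vertex cover number of `G`. -/
noncomputable def vertexCoverNum {α : Type*} (G : SimpleGraph α) : ℕ :=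
  sInf {n | ∃ S : Finset α, S.card = n ∧ ∀ u v, G.Adj u v → u ∈ S ∨ v ∈ S}

/-- The independence number of `G`. -/
noncomputable def indepNum {α : Type*} (G : SimpleGraph α) : ℕ :=
  sSup {n | ∃ S : Finset α, S.card = n ∧ ∀ u ∈ S, ∀ v ∈ S, ¬ G.Adj u v}

/-!
List the vertices `(i, b)` of `P_k □ H` with `i < k - 1` in lexicographic order and let
`(i + 1, b)` be the vertex newly dominated by `(i, b)`. Every vertex listed before `(i, b)` has
first coordinate at most `i`, so the only listed neighbour of `(i + 1, b)` up to that point is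
`(i, b)` itself. This gives a legal sequence of length `(k - 1) |H|`; commutativity of `□` gives
`(ℓ - 1) k` as well.
-/
namespace SimpleGraph

variable {α β : Type*} {G : SimpleGraph α}

theorem IsOpenLegal.map {H : SimpleGraph β} (e : G ≃g H) {L : List α} (h : IsOpenLegal G L) :
    IsOpenLegal H (L.map e) := by
  refine ⟨h.1.map e.injective, fun i => ?_⟩
  obtain ⟨w, hw, hfresh⟩ := h.2 (i.cast (L.length_map _))
  refine ⟨e w, by simpa using e.map_adj_iff.mpr hw, fun j hj hadj => ?_⟩
  refine hfresh (j.cast (L.length_map _)) hj ?_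
  exact e.map_adj_iff.mp (by simpa using hadj)

theorem grundyT_congr {H : SimpleGraph β} (e : G ≃g H) : grundyT G = grundyT H := by
  unfold grundyT
  congr 1
  ext n
  constructor
  · rintro ⟨L, hL, rfl⟩
    exact ⟨_, hL.map e, L.length_map _⟩
  · rintro ⟨L, hL, rfl⟩
    simpa using ⟨_, hL.map e.symm, L.length_map _⟩

theorem IsOpenLegal.length_le_grundyT [Fintype α] {L : List α} (h : IsOpenLegal G L) :
    L.length ≤ grundyT G :=
  le_csSup ⟨Fintype.card α, by rintro _ ⟨L, hL, rfl⟩; exact hL.1.length_le_card⟩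
    ⟨L, h, rfl⟩

theorem card_le_grundyT_of_injective [Fintype α] {ι : Type*} [Fintype ι] [LinearOrder ι]
    {f : ι → α} (hf : f.Injective) (w : ι → α) (hadj : ∀ p, G.Adj (f p) (w p))
    (hfresh : ∀ p q, q < p → ¬ G.Adj (f q) (w p)) : Fintype.card ι ≤ grundyT G := by
  let e := Fintype.orderIsoFinOfCardEq ι rfl
  have hlegal : IsOpenLegal G (List.ofFn (f ∘ e)) := by
    refine ⟨List.nodup_ofFn.mpr (hf.comp e.injective),
      fun i => ⟨w (e ⟨i, by simpa using i.isLt⟩), ?_, ?_⟩⟩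
    · simpa using hadj _
    · intro j hj
      simpa using hfresh _ _ (e.strictMono hj)
  simpa using hlegal.length_le_grundyT

theorem mul_card_le_grundyT_pathGraph_boxProd [Fintype β] (m : ℕ) (H : SimpleGraph β) :
    m * Fintype.card β ≤ grundyT (pathGraph (m + 1) □ H) := by
  let _ : LinearOrder β := LinearOrder.lift' _ (Fintype.equivFin β).injective
  have hinj : Function.Injective fun p : Fin m ×ₗ β => ((ofLex p).1.castSucc, (ofLex p).2) := by
    intro p q h
    simp only [Prod.mk.injEq, Fin.castSucc_inj] at h
    exact ofLex_inj.mp (Prod.ext h.1 h.2)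
  have hfresh : ∀ p q : Fin m ×ₗ β, q < p →
      ¬ (pathGraph (m + 1) □ H).Adj ((ofLex q).1.castSucc, (ofLex q).2)
        ((ofLex p).1.succ, (ofLex p).2) := by
    intro p q hqp hadj
    have hle : ((ofLex q).1 : ℕ) ≤ (ofLex p).1 := Prod.Lex.monotone_fst _ _ hqp.le
    rcases boxProd_adj.mp hadj with ⟨hpath, hsnd⟩ | ⟨-, hfst⟩
    · have hfst : (ofLex q).1 = (ofLex p).1 := by
        simp only [pathGraph_adj, Fin.val_castSucc, Fin.val_succ] at hpath
        omega
      exact hqp.ne (ofLex_inj.mp (Prod.ext hfst hsnd))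
    · have := congrArg Fin.val hfst
      simp only [Fin.val_castSucc, Fin.val_succ] at this
      omega
  simpa using card_le_grundyT_of_injective hinj (fun p => ((ofLex p).1.succ, (ofLex p).2))
    (fun p => by simp [pathGraph_adj]) hfresh

theorem pred_mul_le_grundyT_pathGraph_boxProd_pathGraph (k l : ℕ) :
    (k - 1) * l ≤ grundyT (pathGraph k □ pathGraph l) := by
  rcases k with _ | m
  · simp
  · simpa using mul_card_le_grundyT_pathGraph_boxProd m (pathGraph l)

end SimpleGraph

theorem grundyT_boxProd_paths_ge_general (k l : ℕ) :
    k * l - min k l ≤ grundyT ((pathGraph k).boxProd (pathGraph l)) := by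
  rcases le_total l k with h | h
  · rw [min_eq_right h, ← Nat.sub_one_mul]
    exact pred_mul_le_grundyT_pathGraph_boxProd_pathGraph k l
  · rw [min_eq_left h, mul_comm, ← Nat.sub_one_mul, grundyT_congr (boxProdComm _ _)]
    exact pred_mul_le_grundyT_pathGraph_boxProd_pathGraph l k

theorem grundyT_boxProd_paths_ge (k l : ℕ) (hk : 3 ≤ k) (hl : 3 ≤ l) :
    k * l - min k l ≤ grundyT ((pathGraph k).boxProd (pathGraph l)) :=
  grundyT_boxProd_paths_ge_general k l
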